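/- arXiv:2506.21787 — 3 statements merged into one kernel-verified Lean document; each statement's English description precedes it below -/
import Mathlib

section
/- Let n ≥ 2 and let x, y ∈ {0,1}^n be binary vectors with first coordinate x_1 = y_1 = 1. If code(x) < code(y), then λ#_n(code(x)) < λ#_n(code(y)). -/
/-! For `x = 1 :: t` the agreements with the leading one are `t` itself, so `λ(x) = t ++ λ(t)`.
Its code is `code t` shifted past `λ(t)`, whose length depends only on the length of `t`;
hence the order of `λ#` on such words is the order of the codes of their tails. -/

/-- Integer encoding of a binary vector (MSB first): code(x) = Σ x_j 2^(m-j). -/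
def code (x : List Bool) : ℕ := x.foldl (fun a b => 2 * a + (if b then 1 else 0)) 0

/-- m-bit binary representation (MSB first) of an integer k. -/
def decode (m k : ℕ) : List Bool := (List.range m).map (fun j => k.testBit (m - 1 - j))

/-- Agreement-indicator map: λ(x) lists 𝟙(x_i = x_j) for pairs i < j in lex order. -/
def lam : List Bool → List Bool
  | [] => []
  | a :: t => (t.map (fun b => a == b)) ++ lam t

/-- Integer-level map λ#_n. -/
def lambdaSharp (n k : ℕ) : ℕ := code (lam (decode n k))

/-- Encoded vertices of 𝟙-CUT(n): v^n(k) = λ#_n(2^(n-1) + k - 1). -/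
def v (n k : ℕ) : ℕ := lambdaSharp n (2 ^ (n - 1) + k - 1)

lemma foldl_code_eq (l : List Bool) (c : ℕ) :
    l.foldl (fun a b => 2 * a + (if b then 1 else 0)) c = c * 2 ^ l.length + code l := by
  induction l generalizing c with
  | nil => simp [code]
  | cons a t ih =>
    simp only [code, List.foldl_cons, List.length_cons] at ih ⊢
    rw [ih, ih (2 * 0 + _)]
    ring

lemma code_cons (a : Bool) (t : List Bool) :
    code (a :: t) = (if a then 1 else 0) * 2 ^ t.length + code t := by
  rw [code, List.foldl_cons, foldl_code_eq]
  simp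

lemma code_append (a b : List Bool) : code (a ++ b) = code a * 2 ^ b.length + code b := by
  rw [code, List.foldl_append, foldl_code_eq]
  rfl

lemma code_lt_two_pow (l : List Bool) : code l < 2 ^ l.length := by
  induction l with
  | nil => simp [code]
  | cons a t ih =>
    rw [code_cons, List.length_cons, pow_succ]
    cases a <;> simp <;> omega

lemma code_append_lt_code_append {a b c d : List Bool} (hcd : c.length = d.length)
    (hab : code a < code b) : code (a ++ c) < code (b ++ d) := by
  rw [code_append, code_append, ← hcd]
  calc code a * 2 ^ c.length + code c
      < (code a + 1) * 2 ^ c.length := by linarith [code_lt_two_pow c]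
    _ ≤ code b * 2 ^ c.length := Nat.mul_le_mul_right _ hab
    _ ≤ code b * 2 ^ c.length + code d := Nat.le_add_right _ _

lemma code_lt_code_of_cons_lt_cons {a : Bool} {s t : List Bool} (hst : s.length = t.length)
    (h : code (a :: s) < code (a :: t)) : code s < code t := by
  rw [code_cons, code_cons, hst] at h
  omega

lemma decode_succ (m k : ℕ) : decode (m + 1) k = k.testBit m :: decode m k := by
  rw [decode, List.range_succ_eq_map, List.map_cons, List.map_map, decode]
  congr 1
  refine List.map_congr_left fun j _ => ?_
  simp only [Function.comp_apply]
  congr 1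
  omega

lemma decode_length_code (l : List Bool) : decode l.length (code l) = l := by
  induction l with
  | nil => simp [decode]
  | cons a t ih =>
    have testBit_code_cons (j : ℕ) : (code (a :: t)).testBit j =
        if j < t.length then (code t).testBit j else (a && (1 : ℕ).testBit (j - t.length)) := by
      rw [code_cons, Nat.mul_comm, Nat.testBit_two_pow_mul_add _ (code_lt_two_pow t)]
      cases a <;> simp
    rw [List.length_cons, decode_succ, testBit_code_cons, if_neg (lt_irrefl _)]
    conv_rhs => rw [← ih]
    simp only [decode, Nat.sub_self, Nat.testBit_one_zero, Bool.and_true, List.cons.injEq, true_and]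
    refine List.map_congr_left fun j hj => ?_
    rw [testBit_code_cons, if_pos (by simp at hj; omega)]

lemma length_lam (l : List Bool) : (lam l).length = l.length.choose 2 := by
  induction l with
  | nil => rfl
  | cons a t ih =>
    rw [lam, List.length_append, List.length_map, ih, List.length_cons,
      Nat.choose_succ_succ', Nat.choose_one_right, add_comm]

lemma lam_true_cons (t : List Bool) : lam (true :: t) = t ++ lam t := by
  simp [lam]

lemma lambdaSharp_code (l : List Bool) : lambdaSharp l.length (code l) = code (lam l) := by
  rw [lambdaSharp, decode_length_code]

theorem stmt_4_general (n : ℕ) (x y : List Bool)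
    (hxlen : x.length = n) (hylen : y.length = n)
    (hx1 : x.head? = some true) (hy1 : y.head? = some true)
    (h : code x < code y) :
    lambdaSharp n (code x) < lambdaSharp n (code y) := by
  obtain ⟨s, rfl⟩ := List.head?_eq_some_iff.mp hx1
  obtain ⟨t, rfl⟩ := List.head?_eq_some_iff.mp hy1
  have hst : s.length = t.length := by simp only [List.length_cons] at hxlen hylen; omega
  rw [← hxlen, lambdaSharp_code, hxlen, ← hylen, lambdaSharp_code, lam_true_cons, lam_true_cons]
  exact code_append_lt_code_append (by rw [length_lam, length_lam, hst])
    (code_lt_code_of_cons_lt_cons hst h)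

theorem stmt_4 (n : ℕ) (hn : 2 ≤ n) (x y : List Bool)
    (hxlen : x.length = n) (hylen : y.length = n)
    (hx1 : x.head? = some true) (hy1 : y.head? = some true)
    (h : code x < code y) :
    lambdaSharp n (code x) < lambdaSharp n (code y) :=
  stmt_4_general n x y hxlen hylen hx1 hy1 h
end

section
/- For every integer N ≥ 2 and every integer k ≥ 1, S^N(S^{2N}(k)) = S^N(k); that is, precomposing the alternating cycle function with period parameter N by the one with period parameter 2N leaves it unchanged. -/
/-- The alternating cycle function S^N(k). -/
def altCycle (N k : ℕ) : ℕ :=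
  if ((k - 1) / N) % 2 = 0 then N + 1 - (k - ((k - 1) / N) * N)
  else k - ((k - 1) / N) * N

/-!
With `m = (k - 1) mod 2N`, the value `S^N(k)` is `N - m` for `m < N` and `m + 1 - N` otherwise,
a profile on the residues mod `2N` that is symmetric under `m ↦ 2N - 1 - m`. Reducing `k - 1`
modulo `4N` instead shows that `S^{2N}(k) - 1` is congruent mod `2N` either to `k - 1` or to its
mirror image, so `S^N` cannot tell `S^{2N}(k)` and `k` apart.
-/

def zigzag (N m : ℕ) : ℕ :=
  if m < N then N - m else m + 1 - N

theorem altCycle_eq_zigzag {N k : ℕ} (hN : 0 < N) (hk : 1 ≤ k) :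
    altCycle N k = zigzag N ((k - 1) % (2 * N)) := by
  have hmod : (k - 1) % (2 * N) = (k - 1) % N + N * ((k - 1) / N % 2) := by
    rw [Nat.mul_comm, Nat.mod_mul]
  have hdiv : (k - 1) / N * N + (k - 1) % N = k - 1 := Nat.div_add_mod' (k - 1) N
  have hlt : (k - 1) % N < N := Nat.mod_lt _ hN
  unfold altCycle zigzag
  rw [hmod]
  generalize (k - 1) / N = q at *
  generalize (k - 1) % N = r at *
  rcases Nat.mod_two_eq_zero_or_one q with h | h <;> rw [h]
  · simp only [if_true, mul_zero, add_zero, hlt]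
    omega
  · simp only [one_ne_zero, if_false, mul_one]
    rw [if_neg (by omega)]
    omega

theorem zigzag_reflect {N m : ℕ} (hm : m < 2 * N) : zigzag N (2 * N - 1 - m) = zigzag N m := by
  unfold zigzag
  split_ifs <;> omega

theorem one_le_altCycle {N k : ℕ} (hN : 0 < N) (hk : 1 ≤ k) : 1 ≤ altCycle N k := by
  have := Nat.mod_lt (k - 1) (show 0 < 2 * N by omega)
  rw [altCycle_eq_zigzag hN hk, zigzag]
  split_ifs <;> omega

theorem altCycle_two_mul_sub_one_mod {N k : ℕ} (hN : 0 < N) (hk : 1 ≤ k) :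
    (altCycle (2 * N) k - 1) % (2 * N) = (k - 1) % (2 * N) ∨
      (altCycle (2 * N) k - 1) % (2 * N) = 2 * N - 1 - (k - 1) % (2 * N) := by
  have hres : (k - 1) % (2 * N) = (k - 1) % (2 * (2 * N)) % (2 * N) :=
    (Nat.mod_mod_of_dvd _ (Dvd.intro_left 2 rfl)).symm
  have hlt := Nat.mod_lt (k - 1) (show 0 < 2 * (2 * N) by omega)
  rw [altCycle_eq_zigzag (by omega) hk, hres, zigzag]
  generalize (k - 1) % (2 * (2 * N)) = p at *
  by_cases hlow : p < 2 * N
  · rw [if_pos hlow, Nat.mod_eq_of_lt hlow, Nat.mod_eq_of_lt (by omega)]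
    omega
  · rw [if_neg hlow, Nat.mod_eq_sub_mod (not_lt.mp hlow), Nat.mod_eq_of_lt (by omega),
      Nat.mod_eq_of_lt (by omega)]
    omega

theorem stmt_13 (N : ℕ) (hN : 2 ≤ N) (k : ℕ) (hk : 1 ≤ k) :
    altCycle N (altCycle (2 * N) k) = altCycle N k := by
  have hN0 : 0 < N := by omega
  rw [altCycle_eq_zigzag hN0 (one_le_altCycle (by omega) hk), altCycle_eq_zigzag hN0 hk]
  rcases altCycle_two_mul_sub_one_mod hN0 hk with h | h
  · rw [h]
  · rw [h, zigzag_reflect (Nat.mod_lt _ (by omega))]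
end

section
/- For every integer N ≥ 2, every integer m ≥ 1, and every integer k ≥ 1, S^N(S^{2^m N}(k)) = S^N(k); that is, the alternating cycle function with parameter N is invariant under precomposition by the alternating cycle function with parameter 2^m N for any power-of-two multiple. -/
theorem altCycle_succ {N : ℕ} (hN : 0 < N) (r : ℕ) :
    altCycle N (r + 1) = if r / N % 2 = 0 then N - r % N else r % N + 1 := by
  have hdecomp := Nat.div_add_mod' r N
  have hlt := Nat.mod_lt r hN
  unfold altCycle
  simp only [Nat.add_sub_cancel]
  split <;> omega

theorem altCycle_mod_succ {N c : ℕ} (hN : 0 < N) (hc : 2 * N ∣ c) (r : ℕ) :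
    altCycle N (r % c + 1) = altCycle N (r + 1) := by
  have hNc : N ∣ c := (dvd_mul_left N 2).trans hc
  have hc' : N * 2 ∣ c := by rwa [mul_comm]
  have hparity : r % c / N % 2 = r / N % 2 := by
    rw [← Nat.mod_mul_right_div_self, ← Nat.mod_mul_right_div_self, Nat.mod_mod_of_dvd _ hc']
  rw [altCycle_succ hN, altCycle_succ hN, hparity, Nat.mod_mod_of_dvd _ hNc]

theorem altCycle_sub_of_lt {N c s : ℕ} (hN : 0 < N) (hc : 2 * N ∣ c) (hs : s < c) :
    altCycle N (c - s) = altCycle N (s + 1) := by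
  obtain ⟨j, rfl⟩ := hc
  have hdecomp := Nat.div_add_mod' s N
  have hlt := Nat.mod_lt s hN
  obtain ⟨d, hd⟩ : ∃ d, s / N + d + 1 = 2 * j := by
    have : s / N < 2 * j := Nat.div_lt_of_lt_mul (by linarith)
    exact ⟨2 * j - s / N - 1, by omega⟩
  have hwindow : 2 * N * j = s / N * N + N * d + N := by
    rw [show 2 * N * j = N * (2 * j) by ring, ← hd]; ring
  have hmirror : (2 * N * j - s - 1) / N = d ∧ (2 * N * j - s - 1) % N = N - 1 - s % N :=
    (Nat.div_mod_unique hN).2 ⟨by omega, by omega⟩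
  rw [show 2 * N * j - s = (2 * N * j - s - 1) + 1 by omega, altCycle_succ hN, altCycle_succ hN,
    hmirror.1, hmirror.2]
  split_ifs <;> omega

theorem stmt_14 (N : ℕ) (hN : 2 ≤ N) (m : ℕ) (hm : 1 ≤ m) (k : ℕ) (hk : 1 ≤ k) :
    altCycle N (altCycle (2 ^ m * N) k) = altCycle N k := by
  obtain ⟨r, rfl⟩ := Nat.exists_eq_add_of_le' hk
  have hNpos : 0 < N := by omega
  have hdvd : 2 * N ∣ 2 ^ m * N :=
    Nat.mul_dvd_mul_right (dvd_pow_self 2 (by omega)) N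
  rw [altCycle_succ (by positivity)]
  split_ifs
  · rw [altCycle_sub_of_lt hNpos hdvd (Nat.mod_lt r (by positivity)),
      altCycle_mod_succ hNpos hdvd]
  · exact altCycle_mod_succ hNpos hdvd r
end
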